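/- If φ ∈ Φ_ex with γ = γ_φ, then for every x ≥ 0 and every h ∈ (0,1], φ(x+h) − φ(x) ≤ h·(γ·φ(1) + (γ−1)·φ(x)). -/

import Mathlib

open Set Filter

/-- `Φ`: convex, strictly increasing bijections of `[0,∞)` (with `φ 0 = 0`). -/
def Phi (φ : ℝ → ℝ) : Prop :=
  ConvexOn ℝ (Ici 0) φ ∧ StrictMonoOn φ (Ici 0) ∧
    Set.BijOn φ (Ici 0) (Ici 0) ∧ φ 0 = 0

/-- `γ_φ = sup_{x ≥ 0} φ(1+x)/(φ(1)+φ(x))`, valued in `[0,∞]`. -/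
noncomputable def gam (φ : ℝ → ℝ) : ENNReal :=
  ⨆ x : Ici (0:ℝ), ENNReal.ofReal (φ (1 + x) / (φ 1 + φ x))

/-!
Convexity of `φ` on `[x, x + 1]` gives `φ(x+h) - φ(x) ≤ h (φ(1+x) - φ(x))`, and the definition
of `γ` as a supremum gives `φ(1+x) ≤ γ (φ(1) + φ(x))`.
-/

lemma ConvexOn.apply_add_le_of_mem_Icc {s : Set ℝ} {f : ℝ → ℝ} (hf : ConvexOn ℝ s f)
    {x h : ℝ} (hx : x ∈ s) (hx1 : x + 1 ∈ s) (hh : h ∈ Icc (0 : ℝ) 1) :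
    f (x + h) ≤ (1 - h) * f x + h * f (x + 1) := by
  have := hf.2 hx hx1 (sub_nonneg.mpr hh.2) hh.1 (sub_add_cancel 1 h)
  rwa [smul_eq_mul, smul_eq_mul, show (1 - h) * x + h * (x + 1) = x + h by ring] at this

namespace Phi

variable {φ : ℝ → ℝ}

lemma apply_nonneg (hφ : Phi φ) {x : ℝ} (hx : 0 ≤ x) : 0 ≤ φ x :=
  hφ.2.2.1.mapsTo hx

lemma apply_one_pos (hφ : Phi φ) : 0 < φ 1 :=
  hφ.2.2.2 ▸ hφ.2.1 self_mem_Ici (mem_Ici.mpr zero_le_one) one_pos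

lemma apply_one_add_le_gam_mul (hφ : Phi φ) {γ : ℝ} (hγ : gam φ = ENNReal.ofReal γ)
    {x : ℝ} (hx : 0 ≤ x) : φ (1 + x) ≤ γ * (φ 1 + φ x) := by
  have hden : 0 < φ 1 + φ x := add_pos_of_pos_of_nonneg hφ.apply_one_pos (hφ.apply_nonneg hx)
  have hnum : 0 < φ (1 + x) :=
    hφ.2.2.2 ▸ hφ.2.1 self_mem_Ici (mem_Ici.mpr (by linarith)) (by linarith)
  have hsup : ENNReal.ofReal (φ (1 + x) / (φ 1 + φ x)) ≤ ENNReal.ofReal γ :=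
    hγ ▸ le_iSup (fun y : Ici (0:ℝ) => ENNReal.ofReal (φ (1 + y) / (φ 1 + φ y))) ⟨x, hx⟩
  rcases ENNReal.ofReal_le_ofReal_iff'.mp hsup with hle | hle
  · exact (div_le_iff₀ hden).mp hle
  · exact absurd hle (div_pos hnum hden).not_ge

end Phi

theorem stmt_11_general (φ : ℝ → ℝ) (hφ : Phi φ) (γ : ℝ)
    (hγ : gam φ = ENNReal.ofReal γ) :
    ∀ x : ℝ, 0 ≤ x → ∀ h : ℝ, 0 < h → h ≤ 1 →
      φ (x + h) - φ x ≤ h * (γ * φ 1 + (γ - 1) * φ x) := by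
  intro x hx h hh hh1
  have hconv : φ (x + h) ≤ (1 - h) * φ x + h * φ (x + 1) :=
    hφ.1.apply_add_le_of_mem_Icc hx (mem_Ici.mpr (by linarith)) ⟨hh.le, hh1⟩
  have hgam : h * φ (x + 1) ≤ h * (γ * (φ 1 + φ x)) :=
    mul_le_mul_of_nonneg_left (add_comm x 1 ▸ hφ.apply_one_add_le_gam_mul hγ hx) hh.le
  linarith

/-- If `φ ∈ Φ_ex` with `γ = γ_φ`, then for `x ≥ 0` and `h ∈ (0,1]`,
`φ(x+h) − φ(x) ≤ h (γ φ(1) + (γ−1) φ(x))`. -/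
theorem stmt_11 (φ : ℝ → ℝ) (hφ : Phi φ) (γ : ℝ)
    (hγ : gam φ = ENNReal.ofReal γ) (hγ0 : 0 ≤ γ) :
    ∀ x : ℝ, 0 ≤ x → ∀ h : ℝ, 0 < h → h ≤ 1 →
      φ (x + h) - φ x ≤ h * (γ * φ 1 + (γ - 1) * φ x) :=
  stmt_11_general φ hφ γ hγ
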